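/- Suppose (H₀) holds, h is a Bregman function with zone C, f(x) = ⟨c, x⟩ is linear, and the set S(P) of minimizers of f over cl F is nonempty. Then the global solution x : [0, ∞) → F of the steepest descent equation ẋ(t) = −∇²h(x(t))⁻¹[I − Aᵀ(A∇²h(x(t))⁻¹Aᵀ)⁻¹A∇²h(x(t))⁻¹]c with x(0) = x⁰ converges as t → ∞ to the unique solution x* of the problem: minimize D_h(x, x⁰) over x ∈ S(P). -/

import Mathlib

/-!
For `Az = b`, the Lyapunov function `t ↦ D_h(z, x(t))` has derivative `⟨c, z - x(t)⟩`: the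
Hessian metric turns the descent direction into `-c` up to a vector in the range of `Aᵀ`, which is
orthogonal to `z - x(t)`. For `z ∈ S(P)` it is therefore nonincreasing, which confines the
trajectory to a bounded level set of `D_h(z, ·)`, and, being nonnegative, it forces `⟨c, x(t)⟩`
to approach the optimal value along times `tⱼ → ∞`. A cluster point `x̄` of `x(tⱼ)` lies in
`S(P)`, and `D_h(x̄, x(t))` decreases to `0` because `D_h(x̄, x(tⱼ)) → 0`. For `z ∈ S(P)` the
difference `D_h(z, x(t)) - D_h(x̄, x(t))` is constant, so `D_h(z, x⁰) - D_h(x̄, x⁰)` equals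
`lim D_h(z, x(t)) ≥ 0`. Finally, strict convexity of `h` at the midpoint of `p ≠ q` keeps
`D_h(p, y) + D_h(q, y)` away from `0`; this yields both uniqueness of `x̄` and `x(t) → x̄`.
-/

noncomputable section
open Set Filter Topology Matrix MeasureTheory

abbrev E (n : ℕ) := EuclideanSpace ℝ (Fin n)

/-- Action of a matrix on a vector of `EuclideanSpace ℝ (Fin n)`. -/
def matVec {n : ℕ} (M : Matrix (Fin n) (Fin n) ℝ) (v : E n) : E n := WithLp.toLp 2 (M.mulVec v)

/-- The continuous linear map on Euclidean space associated with a matrix. -/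
def matCLM {n : ℕ} (M : Matrix (Fin n) (Fin n) ℝ) : E n →L[ℝ] E n :=
  LinearMap.toContinuousLinearMap (Matrix.toEuclideanLin M)

/-- The steepest descent vector field
`x ↦ −H(x)⁻¹[I − Aᵀ(A H(x)⁻¹ Aᵀ)⁻¹ A H(x)⁻¹] g(x)` for the Hessian metric. -/
def sdVF {n m : ℕ} (A : Matrix (Fin m) (Fin n) ℝ)
    (Hess : E n → Matrix (Fin n) (Fin n) ℝ) (g : E n → E n) (x : E n) : E n :=
  -(matVec ((Hess x)⁻¹ * (1 - Aᵀ * (A * (Hess x)⁻¹ * Aᵀ)⁻¹ * A * (Hess x)⁻¹)) (g x))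

/-- The `D`-function (Bregman distance) of `h`: `D_h(a,y) = h(a) − h(y) − ⟨∇h(y), a − y⟩`. -/
def Dh {n : ℕ} (h : E n → ℝ) (a y : E n) : ℝ :=
  h a - h y - (inner ℝ (gradient h y) (a - y) : ℝ)

theorem ConvexOn.add_le_of_hasFDerivAt {F : Type*} [NormedAddCommGroup F] [NormedSpace ℝ F]
    {s : Set F} {f : F → ℝ} {f' : F →L[ℝ] ℝ} {y a : F} (hf : ConvexOn ℝ s f) (hy : y ∈ s)
    (ha : a ∈ s) (hf' : HasFDerivAt f f' y) : f y + f' (a - y) ≤ f a := by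
  have hline : ConvexOn ℝ (Icc (0 : ℝ) 1) (f ∘ AffineMap.lineMap y a) :=
    (hf.comp_affineMap _).subset (fun t ht => hf.1.lineMap_mem hy ha ht) (convex_Icc 0 1)
  have hderiv : HasDerivAt (f ∘ AffineMap.lineMap y a) (f' (a - y)) (0 : ℝ) :=
    hf'.comp_hasDerivAt_of_eq 0 AffineMap.hasDerivAt_lineMap (AffineMap.lineMap_apply_zero y a).symm
  have := hline.le_slope_of_hasDerivAt (left_mem_Icc.2 zero_le_one) (right_mem_Icc.2 zero_le_one)
    one_pos hderiv
  simp only [slope_def_field, Function.comp_apply, AffineMap.lineMap_apply_one,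
    AffineMap.lineMap_apply_zero, sub_zero, div_one] at this
  linarith

lemma Dh_nonneg {n : ℕ} {s : Set (E n)} {h : E n → ℝ} (hh : ConvexOn ℝ s h) {a y : E n}
    (ha : a ∈ s) (hy : y ∈ s) (hdiff : DifferentiableAt ℝ h y) : 0 ≤ Dh h a y := by
  have := hh.add_le_of_hasFDerivAt hy ha hdiff.hasGradientAt.hasFDerivAt
  simp only [InnerProductSpace.toDual_apply_apply] at this
  simp only [Dh]
  linarith

lemma mul_Dh_add_mul_Dh {n : ℕ} (h : E n → ℝ) (p q y : E n) {μ ν : ℝ} (hμν : μ + ν = 1) :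
    μ * Dh h p y + ν * Dh h q y
      = Dh h (μ • p + ν • q) y + (μ * h p + ν * h q - h (μ • p + ν • q)) := by
  have hy : μ • p + ν • q - y = μ • (p - y) + ν • (q - y) := by
    calc μ • p + ν • q - y = μ • p + ν • q - (μ + ν) • y := by rw [hμν, one_smul]
      _ = μ • (p - y) + ν • (q - y) := by module
  simp only [Dh, hy, inner_add_right, real_inner_smul_right]
  linear_combination (-h y) * hμν

theorem eq_of_tendsto_Dh_zero {n : ℕ} {ι : Type*} {l : Filter ι} [l.NeBot] {s : Set (E n)}
    {h : E n → ℝ} (hh : StrictConvexOn ℝ s h) {p q : E n} (hp : p ∈ s) (hq : q ∈ s)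
    {y : ι → E n} (hy : ∀ᶠ i in l, y i ∈ s ∧ DifferentiableAt ℝ h (y i))
    (hpy : Tendsto (fun i => Dh h p (y i)) l (𝓝 0))
    (hqy : Tendsto (fun i => Dh h q (y i)) l (𝓝 0)) : p = q := by
  by_contra hpq
  set m : E n := (1 / 2 : ℝ) • p + (1 / 2 : ℝ) • q
  have hgap : 0 < 1 / 2 * h p + 1 / 2 * h q - h m := by
    have := hh.2 hp hq hpq (by norm_num : (0 : ℝ) < 1 / 2) (by norm_num : (0 : ℝ) < 1 / 2)
      (by norm_num)
    simp only [smul_eq_mul] at this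
    linarith
  have hle : ∀ᶠ i in l, 1 / 2 * h p + 1 / 2 * h q - h m
      ≤ 1 / 2 * Dh h p (y i) + 1 / 2 * Dh h q (y i) := by
    filter_upwards [hy] with i ⟨hys, hyd⟩
    have hm : m ∈ s := hh.1 hp hq (by norm_num) (by norm_num) (by norm_num)
    rw [mul_Dh_add_mul_Dh h p q (y i) (by norm_num)]
    linarith [Dh_nonneg hh.convexOn hm hys hyd]
  have hlim : Tendsto (fun i => 1 / 2 * Dh h p (y i) + 1 / 2 * Dh h q (y i)) l (𝓝 0) := by
    have := (hpy.const_mul (1 / 2)).add (hqy.const_mul (1 / 2))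
    rwa [mul_zero, add_zero] at this
  linarith [ge_of_tendsto hlim hle]

theorem tendsto_of_tendsto_Dh_zero {n : ℕ} {ι : Type*} {l : Filter ι} [l.IsCountablyGenerated]
    {C : Set (E n)} {h : E n → ℝ} (hdiff : ∀ y ∈ C, DifferentiableAt ℝ h y)
    (hstrict : StrictConvexOn ℝ (closure C) h)
    (hlim : ∀ y ∈ closure C, ∀ yseq : ℕ → E n, (∀ j, yseq j ∈ C) →
      Tendsto yseq atTop (𝓝 y) → Tendsto (fun j => Dh h y (yseq j)) atTop (𝓝 0))
    {y : ι → E n} (hyC : ∀ i, y i ∈ C) (hbdd : Bornology.IsBounded (range y))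
    {p : E n} (hp : p ∈ closure C) (hpy : Tendsto (fun i => Dh h p (y i)) l (𝓝 0)) :
    Tendsto y l (𝓝 p) := by
  refine tendsto_of_subseq_tendsto fun ns hns => ?_
  obtain ⟨q, hq, φ, hφ, hyq⟩ := tendsto_subseq_of_bounded hbdd fun k => mem_range_self (ns k)
  have hqC : q ∈ closure C := closure_mono (range_subset_iff.2 hyC) hq
  have hpq : p = q := eq_of_tendsto_Dh_zero hstrict hp hqC
    (Eventually.of_forall fun k => ⟨subset_closure (hyC _), hdiff _ (hyC _)⟩)
    (hpy.comp (hns.comp hφ.tendsto_atTop)) (hlim q hqC _ (fun k => hyC _) hyq)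
  exact ⟨φ, hpq ▸ hyq⟩

lemma inner_matCLM_sdVF {n m : ℕ} {A : Matrix (Fin m) (Fin n) ℝ}
    {Hess : E n → Matrix (Fin n) (Fin n) ℝ} {g : E n → E n} {y d : E n}
    (hH : IsUnit (Hess y).det) (hd : A *ᵥ d = 0) :
    inner ℝ (matCLM (Hess y) (sdVF A Hess g y)) d = -inner ℝ (g y) d := by
  set H := Hess y
  set P := (A * H⁻¹ * Aᵀ)⁻¹ * A * H⁻¹
  have hHsd : (matCLM H (sdVF A Hess g y)).ofLp = -((g y).ofLp - Aᵀ *ᵥ P *ᵥ (g y).ofLp) := by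
    simp [matCLM, sdVF, matVec, H, P, Matrix.mulVec_mulVec, ← Matrix.mul_assoc,
      Matrix.mul_nonsing_inv _ hH, Matrix.sub_mulVec]
  have hPd : d.ofLp ⬝ᵥ (Aᵀ *ᵥ P *ᵥ (g y).ofLp) = 0 := by
    rw [Matrix.dotProduct_mulVec, Matrix.vecMul_transpose, hd, zero_dotProduct]
  simp only [EuclideanSpace.inner_eq_star_dotProduct, star_trivial, hHsd, dotProduct_neg,
    dotProduct_sub, hPd, sub_zero]

lemma hasDerivAt_Dh_comp {n : ℕ} {h : E n → ℝ} {L : E n →L[ℝ] E n} {x : ℝ → E n} {v : E n}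
    {t : ℝ} (z : E n) (hh : DifferentiableAt ℝ h (x t)) (hL : HasFDerivAt (gradient h) L (x t))
    (hx : HasDerivAt x v t) :
    HasDerivAt (fun s => Dh h z (x s)) (-inner ℝ (L v) (z - x t)) t := by
  have hhx := hh.hasFDerivAt.comp_hasDerivAt t hx
  have hgx := (hL.comp_hasDerivAt t hx).inner ℝ (hx.const_sub z)
  refine (((hasDerivAt_const t (h z)).sub hhx).sub hgx).congr_deriv ?_
  simp only [gradient, InnerProductSpace.toDual_symm_apply, Function.comp_apply, inner_neg_right]
  ring

lemma hasDerivAt_Dh_sdVF {n m : ℕ} {A : Matrix (Fin m) (Fin n) ℝ} {h : E n → ℝ}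
    {Hess : E n → Matrix (Fin n) (Fin n) ℝ} {c z : E n} {x : ℝ → E n} {t : ℝ}
    (hh : DifferentiableAt ℝ h (x t)) (hHess : HasFDerivAt (gradient h) (matCLM (Hess (x t))) (x t))
    (hpos : (Hess (x t)).PosDef) (hz : A *ᵥ z = A *ᵥ x t)
    (hx : HasDerivAt x (sdVF A Hess (fun _ => c) (x t)) t) :
    HasDerivAt (fun s => Dh h z (x s)) (inner ℝ c z - inner ℝ c (x t)) t := by
  have hd : A *ᵥ WithLp.ofLp (z - x t) = 0 := by
    rw [WithLp.ofLp_sub, Matrix.mulVec_sub, hz, sub_self]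
  refine (hasDerivAt_Dh_comp z hh hHess hx).congr_deriv ?_
  rw [inner_matCLM_sdVF (isUnit_iff_ne_zero.2 hpos.det_pos.ne') hd, neg_neg, inner_sub_right]

lemma exists_neg_lt_deriv_of_nonneg {φ φ' : ℝ → ℝ} {T δ : ℝ} (hδ : 0 < δ)
    (hφ : ∀ t ∈ Ici T, HasDerivAt φ (φ' t) t) (hφ0 : ∀ t ∈ Ici T, 0 ≤ φ t) :
    ∃ t ∈ Ici T, -δ < φ' t := by
  by_contra! hle
  set t₁ := T + (φ T + 1) / δ
  have hTt₁ : T < t₁ := lt_add_of_pos_right T (div_pos (by linarith [hφ0 T self_mem_Ici]) hδ)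
  obtain ⟨ξ, hξ, hslope⟩ := exists_hasDerivAt_eq_slope φ φ' hTt₁
    (fun t ht => (hφ t ht.1).continuousAt.continuousWithinAt)
    (fun t ht => hφ t (le_of_lt ht.1))
  have hdrop : φ t₁ - φ T ≤ -δ * (t₁ - T) := by
    rw [eq_div_iff (sub_ne_zero.2 hTt₁.ne')] at hslope
    rw [← hslope]
    exact mul_le_mul_of_nonneg_right (hle ξ (le_of_lt hξ.1)) (sub_nonneg.2 hTt₁.le)
  have hδt₁ : -δ * (t₁ - T) = -(φ T + 1) := by
    simp only [t₁, add_sub_cancel_left]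
    field_simp
  linarith [hφ0 t₁ hTt₁.le]

section Trajectory

variable {n : ℕ} {C K : Set (E n)} {h : E n → ℝ} {c : E n} {x : ℝ → E n}
  (hdiff : ∀ y ∈ C, DifferentiableAt ℝ h y) (hconv : ConvexOn ℝ (closure C) h)
  (hKC : K ⊆ closure C) (hxC : ∀ t ∈ Ici (0 : ℝ), x t ∈ C) (hxK : ∀ t ∈ Ici (0 : ℝ), x t ∈ K)
  (hder : ∀ z ∈ K, ∀ t ∈ Ici (0 : ℝ),
    HasDerivAt (fun s => Dh h z (x s)) (inner ℝ c z - inner ℝ c (x t)) t)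

include hxK hder in
lemma antitoneOn_Dh_trajectory {z : E n} (hz : z ∈ K) (hmin : IsMinOn (inner ℝ c ·) K z) :
    AntitoneOn (fun t => Dh h z (x t)) (Ici 0) := by
  refine antitoneOn_of_hasDerivWithinAt_nonpos (convex_Ici 0)
    (fun t ht => (hder z hz t ht).continuousAt.continuousWithinAt)
    (fun t ht => (hder z hz t (interior_subset ht)).hasDerivWithinAt) fun t ht => ?_
  exact sub_nonpos.2 (isMinOn_iff.1 hmin _ (hxK t (interior_subset ht)))

include hdiff hconv hKC hxC hxK hder in
lemma exists_seq_tendsto_inner_trajectory {z : E n} (hz : z ∈ K)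
    (hmin : IsMinOn (inner ℝ c ·) K z) :
    ∃ τ : ℕ → ℝ, (∀ j, τ j ∈ Ici 0) ∧ Tendsto τ atTop atTop ∧
      Tendsto (fun j => inner ℝ c (x (τ j))) atTop (𝓝 (inner ℝ c z)) := by
  have hclose : ∀ j : ℕ, ∃ t ∈ Ici (j : ℝ), inner ℝ c (x t) < inner ℝ c z + 1 / (j + 1) := by
    intro j
    have hj : ∀ t ∈ Ici (j : ℝ), t ∈ Ici 0 := fun t ht => mem_Ici.2 (le_trans j.cast_nonneg ht)
    obtain ⟨t, ht, hlt⟩ := exists_neg_lt_deriv_of_nonneg Nat.one_div_pos_of_nat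
      (fun t ht => hder z hz t (hj t ht))
      (fun t ht => Dh_nonneg hconv (hKC hz) (subset_closure (hxC t (hj t ht)))
        (hdiff _ (hxC t (hj t ht))))
    exact ⟨t, ht, neg_lt_sub_iff_lt_add'.1 hlt⟩
  choose τ hτj hτc using hclose
  have hτ0 : ∀ j, τ j ∈ Ici 0 := fun j => mem_Ici.2 (le_trans j.cast_nonneg (hτj j))
  refine ⟨τ, hτ0, tendsto_atTop_mono hτj tendsto_natCast_atTop_atTop, ?_⟩
  refine tendsto_of_tendsto_of_tendsto_of_le_of_le tendsto_const_nhds ?_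
    (fun j => isMinOn_iff.1 hmin _ (hxK _ (hτ0 j))) fun j => (hτc j).le
  simpa using tendsto_one_div_add_atTop_nhds_zero_nat.const_add (inner ℝ c z)

include hKC hxC hxK hder in
lemma isBounded_trajectory
    (hlevel : ∀ a ∈ closure C, ∀ γ : ℝ, Bornology.IsBounded {y ∈ C | Dh h a y ≤ γ})
    {z : E n} (hz : z ∈ K) (hmin : IsMinOn (inner ℝ c ·) K z) :
    Bornology.IsBounded (x '' Ici 0) :=
  (hlevel z (hKC hz) (Dh h z (x 0))).subset <| image_subset_iff.2 fun t ht =>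
    ⟨hxC t ht, antitoneOn_Dh_trajectory hxK hder hz hmin self_mem_Ici ht ht⟩

include hder in
lemma Dh_trajectory_sub_Dh_trajectory {z w : E n} (hz : z ∈ K) (hw : w ∈ K)
    (hzw : inner ℝ c z = inner ℝ c w) {t : ℝ} (ht : t ∈ Ici 0) :
    Dh h z (x t) - Dh h w (x t) = Dh h z (x 0) - Dh h w (x 0) := by
  have hd : ∀ s ∈ Ici (0 : ℝ), HasDerivAt (fun s => Dh h z (x s) - Dh h w (x s)) 0 s :=
    fun s hs => ((hder z hz s hs).sub (hder w hw s hs)).congr_deriv (by rw [hzw]; ring)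
  exact constant_of_has_deriv_right_zero (fun s hs => (hd s hs.1).continuousAt.continuousWithinAt)
    (fun s hs => (hd s hs.1).hasDerivWithinAt) t ⟨ht, le_rfl⟩

include hdiff hconv hKC hxC hxK hder in
lemma exists_isMinOn_tendsto_Dh_trajectory (hK : IsClosed K)
    (hlevel : ∀ a ∈ closure C, ∀ γ : ℝ, Bornology.IsBounded {y ∈ C | Dh h a y ≤ γ})
    (hlim : ∀ y ∈ closure C, ∀ yseq : ℕ → E n, (∀ j, yseq j ∈ C) →
      Tendsto yseq atTop (𝓝 y) → Tendsto (fun j => Dh h y (yseq j)) atTop (𝓝 0))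
    (hne : ∃ z ∈ K, IsMinOn (inner ℝ c ·) K z) :
    ∃ xbar ∈ K, IsMinOn (inner ℝ c ·) K xbar ∧
      Tendsto (fun t => Dh h xbar (x t)) atTop (𝓝 0) := by
  obtain ⟨z, hz, hmin⟩ := hne
  obtain ⟨τ, hτ0, hτ, hcτ⟩ :=
    exists_seq_tendsto_inner_trajectory hdiff hconv hKC hxC hxK hder hz hmin
  obtain ⟨xbar, hxbar, φ, hφ, hxφ⟩ := tendsto_subseq_of_bounded
    (isBounded_trajectory hKC hxC hxK hder hlevel hz hmin) fun j => mem_image_of_mem x (hτ0 j)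
  have hxbarK : xbar ∈ K := closure_minimal (image_subset_iff.2 hxK) hK hxbar
  have hcxbar : inner ℝ c xbar = inner ℝ c z :=
    tendsto_nhds_unique (((continuous_const.inner continuous_id).tendsto xbar).comp hxφ)
      (hcτ.comp hφ.tendsto_atTop)
  have hminbar : IsMinOn (inner ℝ c ·) K xbar :=
    isMinOn_iff.2 fun w hw => hcxbar ▸ isMinOn_iff.1 hmin w hw
  refine ⟨xbar, hxbarK, hminbar, ?_⟩
  have hanti : Antitone fun t : Ici (0 : ℝ) => Dh h xbar (x t) :=
    antitoneOn_iff_antitone.1 (antitoneOn_Dh_trajectory hxK hder hxbarK hminbar)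
  have hσ : Tendsto (fun j => (⟨τ (φ j), hτ0 _⟩ : Ici (0 : ℝ))) atTop atTop :=
    tendsto_Ici_atTop.2 (hτ.comp hφ.tendsto_atTop)
  have hDσ := hlim xbar (hKC hxbarK) _ (fun j => hxC _ (hτ0 _)) hxφ
  exact tendsto_comp_val_Ici_atTop.1 ((tendsto_iff_tendsto_subseq_of_antitone hanti hσ).2 hDσ)

include hdiff hKC hxC hxK hder in
theorem exists_tendsto_trajectory_argmin_Dh (hstrict : StrictConvexOn ℝ (closure C) h)
    (hK : IsClosed K)
    (hlevel : ∀ a ∈ closure C, ∀ γ : ℝ, Bornology.IsBounded {y ∈ C | Dh h a y ≤ γ})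
    (hlim : ∀ y ∈ closure C, ∀ yseq : ℕ → E n, (∀ j, yseq j ∈ C) →
      Tendsto yseq atTop (𝓝 y) → Tendsto (fun j => Dh h y (yseq j)) atTop (𝓝 0))
    (hne : ∃ z ∈ K, IsMinOn (inner ℝ c ·) K z) :
    ∃ xstar ∈ K, IsMinOn (inner ℝ c ·) K xstar ∧
      (∀ z ∈ K, IsMinOn (inner ℝ c ·) K z → Dh h xstar (x 0) ≤ Dh h z (x 0)) ∧
      (∀ z ∈ K, IsMinOn (inner ℝ c ·) K z → Dh h z (x 0) ≤ Dh h xstar (x 0) → z = xstar) ∧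
      Tendsto x atTop (𝓝 xstar) := by
  obtain ⟨xbar, hxbarK, hminbar, hD⟩ := exists_isMinOn_tendsto_Dh_trajectory hdiff
    hstrict.convexOn hKC hxC hxK hder hK hlevel hlim hne
  have hxC' : ∀ᶠ t in atTop, x t ∈ closure C ∧ DifferentiableAt ℝ h (x t) :=
    (eventually_ge_atTop 0).mono fun t ht => ⟨subset_closure (hxC t ht), hdiff _ (hxC t ht)⟩
  have hDz : ∀ z ∈ K, IsMinOn (inner ℝ c ·) K z →
      Tendsto (fun t => Dh h z (x t)) atTop (𝓝 (Dh h z (x 0) - Dh h xbar (x 0))) := by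
    intro z hz hmin
    have hzw : inner ℝ c z = inner ℝ c xbar :=
      le_antisymm (isMinOn_iff.1 hmin _ hxbarK) (isMinOn_iff.1 hminbar _ hz)
    have hshift := hD.add_const (Dh h z (x 0) - Dh h xbar (x 0))
    rw [zero_add] at hshift
    refine hshift.congr' ?_
    filter_upwards [eventually_ge_atTop 0] with t ht
    linarith [Dh_trajectory_sub_Dh_trajectory hder hz hxbarK hzw ht]
  have hminD : ∀ z ∈ K, IsMinOn (inner ℝ c ·) K z → Dh h xbar (x 0) ≤ Dh h z (x 0) :=
    fun z hz hmin => sub_nonneg.1 <| ge_of_tendsto (hDz z hz hmin) <|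
      hxC'.mono fun t ht => Dh_nonneg hstrict.convexOn (hKC hz) ht.1 ht.2
  refine ⟨xbar, hxbarK, hminbar, hminD, fun z hz hmin hle => ?_, ?_⟩
  · refine eq_of_tendsto_Dh_zero hstrict (hKC hz) (hKC hxbarK) hxC' ?_ hD
    simpa [le_antisymm hle (hminD z hz hmin)] using hDz z hz hmin
  · have hbdd := isBounded_trajectory hKC hxC hxK hder hlevel hxbarK hminbar
    rw [image_eq_range] at hbdd
    exact tendsto_comp_val_Ici_atTop.1 <| tendsto_of_tendsto_Dh_zero hdiff hstrict hlim
      (fun t : Ici (0 : ℝ) => hxC t t.2) hbdd (hKC hxbarK) (tendsto_comp_val_Ici_atTop.2 hD)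

end Trajectory

theorem stmt11_general
    -- problem data: a full rank `m×n` matrix `A` (`m < n`), `b ∈ ℝᵐ`
    {n m : ℕ}
    (A : Matrix (Fin m) (Fin n) ℝ) (b : Fin m → ℝ)
    -- `C` is a nonempty open convex set, `F = C ∩ {x | Ax = b}` is nonempty
    (C : Set (E n)) (hCopen : IsOpen C)
    (h : E n → ℝ) (Hess : E n → Matrix (Fin n) (Fin n) ℝ)
    -- `(H₀)`: `h` is of Legendre type with `int dom h = C`: it is strictly convex on `C`,
    -- `C²` on `C`, and its gradient blows up at the boundary of `C`;
    -- its Hessian `Hess` is positive definite and locally Lipschitz on `C`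
    (hhC2 : ContDiffOn ℝ 2 h C)
    (hHess : ∀ x ∈ C, HasFDerivAt (gradient h) (matCLM (Hess x)) x)
    (hHpos : ∀ x ∈ C, (Hess x).PosDef)
    -- `h` is a Bregman function with zone `C`
    (hBstrict : StrictConvexOn ℝ (closure C) h)
    (hBlevel : ∀ a ∈ closure C, ∀ γ : ℝ, Bornology.IsBounded {y ∈ C | Dh h a y ≤ γ})
    (hBlim : ∀ y ∈ closure C, ∀ yseq : ℕ → E n, (∀ j, yseq j ∈ C) →
      Tendsto yseq atTop (𝓝 y) → Tendsto (fun j => Dh h y (yseq j)) atTop (𝓝 0))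
    -- linear objective `f(x) = ⟨c,x⟩`, whose optimal set over `cl F` is nonempty
    (c : E n)
    (SP : Set (E n))
    (hSP : SP = {z ∈ closure (C ∩ {w | A.mulVec w = b}) |
      ∀ w ∈ closure (C ∩ {w | A.mulVec w = b}), (inner ℝ c z : ℝ) ≤ (inner ℝ c w : ℝ)})
    (hSPne : SP.Nonempty)
    -- the global trajectory
    (x : ℝ → E n) (x0 : E n) (hx0 : x 0 = x0)
    (hmem : ∀ t ∈ Ici (0:ℝ), x t ∈ C ∩ {z | A.mulVec z = b})
    (hode : ∀ t ∈ Ici (0:ℝ), HasDerivAt x (sdVF A Hess (fun _ => c) (x t)) t) :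
    ∃ xstar : E n, xstar ∈ SP ∧
      (∀ z ∈ SP, Dh h xstar x0 ≤ Dh h z x0) ∧
      (∀ z ∈ SP, (∀ w ∈ SP, Dh h z x0 ≤ Dh h w x0) → z = xstar) ∧
      Tendsto x atTop (𝓝 xstar) := by
  set K := closure (C ∩ {w | A.mulVec w = b})
  have hSP_iff : ∀ z, z ∈ SP ↔ z ∈ K ∧ IsMinOn (inner ℝ c ·) K z := by
    simp [hSP, isMinOn_iff]
  have hKb : K ⊆ {w | A *ᵥ w = b} :=
    closure_minimal inter_subset_right (isClosed_eq (by fun_prop) continuous_const)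
  have hdiff : ∀ y ∈ C, DifferentiableAt ℝ h y := fun y hy =>
    (hhC2.differentiableOn two_ne_zero).differentiableAt (hCopen.mem_nhds hy)
  have hder : ∀ z ∈ K, ∀ t ∈ Ici (0 : ℝ),
      HasDerivAt (fun s => Dh h z (x s)) (inner ℝ c z - inner ℝ c (x t)) t :=
    fun z hz t ht => hasDerivAt_Dh_sdVF (hdiff _ (hmem t ht).1) (hHess _ (hmem t ht).1)
      (hHpos _ (hmem t ht).1) ((hKb hz).trans (hmem t ht).2.symm) (hode t ht)
  obtain ⟨xstar, hxK, hxmin, hDmin, huniq, hlim⟩ := exists_tendsto_trajectory_argmin_Dh hdiff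
    (closure_mono inter_subset_left) (fun t ht => (hmem t ht).1)
    (fun t ht => subset_closure (hmem t ht)) hder hBstrict isClosed_closure hBlevel hBlim
    (hSPne.imp fun z hz => (hSP_iff z).1 hz)
  subst hx0
  have hxSP := (hSP_iff xstar).2 ⟨hxK, hxmin⟩
  refine ⟨xstar, hxSP, fun z hz => hDmin z ((hSP_iff z).1 hz).1 ((hSP_iff z).1 hz).2,
    fun z hz hzmin => ?_, hlim⟩
  exact huniq z ((hSP_iff z).1 hz).1 ((hSP_iff z).1 hz).2 (hzmin xstar hxSP)

/-- Corollary `C:selection`.  If `h` is a Bregman function with zone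
`C`, `f(x) = ⟨c,x⟩` is linear and `S(P) ≠ ∅`, then the global steepest descent solution
converges to the unique minimizer of `D_h(·, x⁰)` over `S(P)`. -/
theorem stmt11
    -- problem data: a full rank `m×n` matrix `A` (`m < n`), `b ∈ ℝᵐ`
    {n m : ℕ} (hm : 0 < m) (hmn : m < n)
    (A : Matrix (Fin m) (Fin n) ℝ) (b : Fin m → ℝ) (hrank : A.rank = m)
    -- `C` is a nonempty open convex set, `F = C ∩ {x | Ax = b}` is nonempty
    (C : Set (E n)) (hCopen : IsOpen C) (hCconv : Convex ℝ C) (hCne : C.Nonempty)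
    (hFne : (C ∩ {x | A.mulVec x = b}).Nonempty)
    (h : E n → ℝ) (Hess : E n → Matrix (Fin n) (Fin n) ℝ)
    -- `(H₀)`: `h` is of Legendre type with `int dom h = C`: it is strictly convex on `C`,
    -- `C²` on `C`, and its gradient blows up at the boundary of `C`;
    -- its Hessian `Hess` is positive definite and locally Lipschitz on `C`
    (hhC2 : ContDiffOn ℝ 2 h C) (hhconv : ConvexOn ℝ C h) (hhstrict : StrictConvexOn ℝ C h)
    (hLeg : ∀ (z : ℕ → E n) (x' : E n), (∀ j, z j ∈ C) → x' ∈ frontier C →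
      Tendsto z atTop (𝓝 x') → Tendsto (fun j => ‖gradient h (z j)‖) atTop atTop)
    (hHess : ∀ x ∈ C, HasFDerivAt (gradient h) (matCLM (Hess x)) x)
    (hHpos : ∀ x ∈ C, (Hess x).PosDef)
    (hHlip : ∀ x ∈ C, ∃ ε > 0, ∃ K : ℝ, ∀ y ∈ C ∩ Metric.ball x ε, ∀ z ∈ C ∩ Metric.ball x ε,
      ‖matCLM (Hess y) - matCLM (Hess z)‖ ≤ K * ‖y - z‖)
    -- `h` is a Bregman function with zone `C`
    (hBcont : ContinuousOn h (closure C)) (hBstrict : StrictConvexOn ℝ (closure C) h)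
    (hBlevel : ∀ a ∈ closure C, ∀ γ : ℝ, Bornology.IsBounded {y ∈ C | Dh h a y ≤ γ})
    (hBlim : ∀ y ∈ closure C, ∀ yseq : ℕ → E n, (∀ j, yseq j ∈ C) →
      Tendsto yseq atTop (𝓝 y) → Tendsto (fun j => Dh h y (yseq j)) atTop (𝓝 0))
    -- linear objective `f(x) = ⟨c,x⟩`, whose optimal set over `cl F` is nonempty
    (c : E n)
    (SP : Set (E n))
    (hSP : SP = {z ∈ closure (C ∩ {w | A.mulVec w = b}) |
      ∀ w ∈ closure (C ∩ {w | A.mulVec w = b}), (inner ℝ c z : ℝ) ≤ (inner ℝ c w : ℝ)})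
    (hSPne : SP.Nonempty)
    -- the global trajectory
    (x : ℝ → E n) (x0 : E n) (hx0 : x 0 = x0) (hx0F : x0 ∈ C ∩ {z | A.mulVec z = b})
    (hmem : ∀ t ∈ Ici (0:ℝ), x t ∈ C ∩ {z | A.mulVec z = b})
    (hode : ∀ t ∈ Ici (0:ℝ), HasDerivAt x (sdVF A Hess (fun _ => c) (x t)) t) :
    ∃ xstar : E n, xstar ∈ SP ∧
      (∀ z ∈ SP, Dh h xstar x0 ≤ Dh h z x0) ∧
      (∀ z ∈ SP, (∀ w ∈ SP, Dh h z x0 ≤ Dh h w x0) → z = xstar) ∧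
      Tendsto x atTop (𝓝 xstar) :=
  stmt11_general A b C hCopen h Hess hhC2 hHess hHpos hBstrict hBlevel hBlim c SP hSP hSPne x x0 hx0
    hmem hode
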